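/- Correctness of the parametric trace slicing algorithm A: for any parametric trace τ, (1) the domain of A(τ).T equals A(τ).Θ, which equals Θ_τ; (2) A(τ).T(θ) = τ↾θ for every θ ∈ A(τ).Θ; and (3) for every parameter instance θ : X ⇀ V, τ↾θ = A(τ).T(max (θ]_{A(τ).Θ}). -/

import Mathlib

/- Partial functions X ⇀ V are modeled as functions `X → Option V`. -/

variable {X V E : Type*}

/-- `θ` is less informative than `θ'` (θ ⊑ θ'): wherever `θ` is defined, `θ'` is
defined with the same value. -/
def PFle (θ θ' : X → Option V) : Prop :=
  ∀ x v, θ x = some v → θ' x = some v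

/-- The everywhere-undefined partial function ⊥. -/
def pbot : X → Option V := fun _ => none

/-- `θ'` is an upper bound of the set `Θ` of partial functions. -/
def IsUB (Θ : Set (X → Option V)) (θ' : X → Option V) : Prop :=
  ∀ θ ∈ Θ, PFle θ θ'

/-- `θ'` is the least upper bound (⊔Θ) of the set `Θ` of partial functions. -/
def IsLubPF (Θ : Set (X → Option V)) (θ' : X → Option V) : Prop :=
  IsUB Θ θ' ∧ ∀ θ'', IsUB Θ θ'' → PFle θ' θ''

/-- Θ is lub closed: every subset of Θ admitting an upper bound has its lub in Θ. -/
def LubClosed (Θ : Set (X → Option V)) : Prop :=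
  ∀ Θ' ⊆ Θ, ∀ u, IsLubPF Θ' u → u ∈ Θ

/-- The lub closure of Θ: the intersection of all lub closed sets including Θ. -/
def lubClosure (Θ : Set (X → Option V)) : Set (X → Option V) :=
  ⋂₀ {Θ' | Θ ⊆ Θ' ∧ LubClosed Θ'}

/-- (θ]_Θ : the elements of Θ that are less informative than θ. -/
def below (θ : X → Option V) (Θ : Set (X → Option V)) : Set (X → Option V) :=
  {θ'' ∈ Θ | PFle θ'' θ}

/-- {θ} ⊔ Θ : the set of all existing lubs θ ⊔ θ'' with θ'' ∈ Θ. -/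
def joinOne (θ : X → Option V) (Θ : Set (X → Option V)) : Set (X → Option V) :=
  {θ' | ∃ θ'' ∈ Θ, IsLubPF {θ, θ''} θ'}

/-- max (θ]_Θ : the maximum element of (θ]_Θ (well defined when Θ is lub closed). -/
noncomputable def maxBelow (Θ : Set (X → Option V)) (θ : X → Option V) :
    X → Option V :=
  Classical.epsilon fun m => m ∈ below θ Θ ∧ ∀ q ∈ below θ Θ, PFle q m

/-- A parametric event is a pair e⟨θ⟩; a parametric trace is a finite list of
parametric events. Θ_τ is the lub closure of the parameter instances occurring in τ. -/
def ThetaOf (τ : List (E × (X → Option V))) : Set (X → Option V) :=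
  lubClosure {θ | ∃ e : E, (e, θ) ∈ τ}

/-- The θ-trace traceSlice τ↾θ : keep (in order) the base events of τ whose parameter
instance is ⊑ θ, dropping the parameter instances. -/
noncomputable def traceSlice (τ : List (E × (X → Option V))) (θ : X → Option V) :
    List E :=
  (τ.filter fun p => @decide (PFle p.2 θ) (Classical.propDecidable _)).map Prod.fst

/-- The state of algorithm A⟨X⟩: the lookup table T (a partial map from parameter
instances to non-parametric traces) and the set Θ of parameter instances. -/
structure AState (X V E : Type*) where
  T : (X → Option V) → Option (List E)
  Th : Set (X → Option V)

/- One step of algorithm A⟨X⟩, processing the parametric event ev = e⟨θ⟩: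
for each θ' ∈ {θ} ⊔ Θ, set T(θ') to T(max (θ']_Θ)) followed by e;
then Θ becomes {⊥, θ} ⊔ Θ = Θ ∪ ({θ} ⊔ Θ). -/
open Classical in

noncomputable def Astep (s : AState X V E) (ev : E × (X → Option V)) :
    AState X V E where
  T := fun θ' =>
    if θ' ∈ joinOne ev.2 s.Th then (s.T (maxBelow s.Th θ')).map (· ++ [ev.1])
    else s.T θ'
  Th := s.Th ∪ joinOne ev.2 s.Th

/- The initial state of algorithm A⟨X⟩: T defined only on ⊥ with T(⊥) = ε,
and Θ = {⊥}. -/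
open Classical in
noncomputable def Ainit : AState X V E where
  T := fun θ' => if θ' = pbot then some [] else none
  Th := {pbot}

/-- Algorithm A⟨X⟩ run on a parametric trace, processing events first to last. -/
noncomputable def Arun (τ : List (E × (X → Option V))) : AState X V E :=
  τ.foldl Astep Ainit


/-!
Processing `e⟨θ⟩` turns the instance set `Θ = lubClosure I` into `Θ ∪ ({θ} ⊔ Θ)`, which is
`lubClosure (I ∪ {θ})`: if a subset of `Θ ∪ ({θ} ⊔ Θ)` with lub `u` meets `{θ} ⊔ Θ`, then
`u = θ ⊔ w`, where `w` is the lub of the elements of `Θ` below `u`. Hence `Θ` stays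
lub closed, so `max (θ']_Θ` exists and every instance of the trace below `θ'` is below it; thus
`τ↾θ' = τ↾(max (θ']_Θ)`, which is exactly the entry the algorithm extends by `e`.
-/

theorem PFle.refl (θ : X → Option V) : PFle θ θ := fun _ _ h => h

theorem PFle.trans {a b c : X → Option V} (hab : PFle a b) (hbc : PFle b c) : PFle a c :=
  fun x v h => hbc x v (hab x v h)

theorem PFle.antisymm {a b : X → Option V} (hab : PFle a b) (hba : PFle b a) : a = b := by
  funext x
  cases ha : a x with
  | some v => exact (hab x v ha).symm
  | none =>
    cases hb : b x with
    | some v => simpa [ha] using hba x v hb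
    | none => rfl

theorem pbot_PFle (θ : X → Option V) : PFle pbot θ := fun _ _ h => by simp [pbot] at h

theorem isUB_pair {a b z : X → Option V} : IsUB {a, b} z ↔ PFle a z ∧ PFle b z := by
  simp [IsUB]

theorem isLubPF_empty : IsLubPF (∅ : Set (X → Option V)) pbot :=
  ⟨fun _ h => absurd h (Set.notMem_empty _), fun θ _ => pbot_PFle θ⟩

theorem isLubPF_pair_of_PFle {a b : X → Option V} (h : PFle a b) : IsLubPF {a, b} b :=
  ⟨isUB_pair.2 ⟨h, PFle.refl b⟩, fun _ hz => (isUB_pair.1 hz).2⟩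

theorem IsLubPF.PFle_of_PFle_of_PFle {a b c z : X → Option V} (h : IsLubPF {a, b} c)
    (haz : PFle a z) (hbz : PFle b z) : PFle c z :=
  h.2 z (isUB_pair.2 ⟨haz, hbz⟩)

/-- The lub is `u` on the union of the domains of the elements of `Θ`, and undefined elsewhere. -/
theorem IsUB.exists_isLubPF {Θ : Set (X → Option V)} {u : X → Option V} (hu : IsUB Θ u) :
    ∃ w, IsLubPF Θ w ∧ PFle w u := by
  classical
  set w : X → Option V := fun x => if ∃ θ ∈ Θ, θ x ≠ none then u x else none
  have hw_of_mem : ∀ θ ∈ Θ, ∀ x v, θ x = some v → w x = some v := fun θ hθ x v hx => by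
    simp only [w, if_pos (⟨θ, hθ, by simp [hx]⟩ : ∃ θ ∈ Θ, θ x ≠ none)]
    exact hu θ hθ x v hx
  have hw_def : ∀ x v, w x = some v → ∃ θ ∈ Θ, θ x = some v := fun x v hx => by
    by_cases hc : ∃ θ ∈ Θ, θ x ≠ none
    · obtain ⟨θ, hθ, hθx⟩ := hc
      obtain ⟨v', hv'⟩ := Option.ne_none_iff_exists'.mp hθx
      rw [hw_of_mem θ hθ x v' hv', Option.some_inj] at hx
      exact ⟨θ, hθ, hx ▸ hv'⟩
    · simp [w, if_neg hc] at hx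
  refine ⟨w, ⟨hw_of_mem, fun z hz x v hx => ?_⟩, fun x v hx => ?_⟩
  · obtain ⟨θ, hθ, hθx⟩ := hw_def x v hx
    exact hz θ hθ x v hθx
  · obtain ⟨θ, hθ, hθx⟩ := hw_def x v hx
    exact hu θ hθ x v hθx

theorem subset_lubClosure (Θ : Set (X → Option V)) : Θ ⊆ lubClosure Θ :=
  fun _ hθ _ hS => hS.1 hθ

theorem lubClosure_subset {Θ S : Set (X → Option V)} (hΘS : Θ ⊆ S) (hS : LubClosed S) :
    lubClosure Θ ⊆ S :=
  fun _ hθ => hθ S ⟨hΘS, hS⟩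

theorem lubClosed_lubClosure (Θ : Set (X → Option V)) : LubClosed (lubClosure Θ) :=
  fun Θ' hsub u hu _ hS => hS.2 Θ' (fun _ hq => hsub hq _ hS) u hu

theorem lubClosure_mono {Θ₁ Θ₂ : Set (X → Option V)} (h : Θ₁ ⊆ Θ₂) :
    lubClosure Θ₁ ⊆ lubClosure Θ₂ :=
  lubClosure_subset (h.trans (subset_lubClosure Θ₂)) (lubClosed_lubClosure Θ₂)

theorem LubClosed.pbot_mem {Θ : Set (X → Option V)} (hΘ : LubClosed Θ) : pbot ∈ Θ :=
  hΘ ∅ (Set.empty_subset _) pbot isLubPF_empty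

theorem lubClosed_singleton_pbot : LubClosed ({pbot} : Set (X → Option V)) := by
  intro Θ' hsub u hu
  have hub : IsUB Θ' pbot := fun q hq => by
    rw [hsub hq]
    exact PFle.refl pbot
  exact PFle.antisymm (hu.2 pbot hub) (pbot_PFle u)

theorem lubClosure_empty : lubClosure (∅ : Set (X → Option V)) = {pbot} :=
  (lubClosure_subset (Set.empty_subset _) lubClosed_singleton_pbot).antisymm
    (Set.singleton_subset_iff.2 (lubClosed_lubClosure ∅).pbot_mem)

theorem LubClosed.maxBelow_spec {Θ : Set (X → Option V)} (hΘ : LubClosed Θ)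
    (θ : X → Option V) :
    maxBelow Θ θ ∈ below θ Θ ∧ ∀ q ∈ below θ Θ, PFle q (maxBelow Θ θ) := by
  apply Classical.epsilon_spec (p := fun m => m ∈ below θ Θ ∧ ∀ q ∈ below θ Θ, PFle q m)
  obtain ⟨w, hw, hwθ⟩ := IsUB.exists_isLubPF (Θ := below θ Θ) (u := θ) fun _ hq => hq.2
  exact ⟨w, ⟨hΘ _ (fun _ hq => hq.1) w hw, hwθ⟩, hw.1⟩

theorem mem_joinOne_self {Θ : Set (X → Option V)} (hΘ : pbot ∈ Θ) (θ : X → Option V) :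
    θ ∈ joinOne θ Θ :=
  ⟨pbot, hΘ, by rw [Set.pair_comm]; exact isLubPF_pair_of_PFle (pbot_PFle θ)⟩

theorem mem_joinOne_of_PFle {Θ : Set (X → Option V)} {θ θ' : X → Option V}
    (hθ' : θ' ∈ Θ) (h : PFle θ θ') : θ' ∈ joinOne θ Θ :=
  ⟨θ', hθ', isLubPF_pair_of_PFle h⟩

theorem PFle_of_mem_joinOne {Θ : Set (X → Option V)} {θ θ' : X → Option V}
    (h : θ' ∈ joinOne θ Θ) : PFle θ θ' := by
  obtain ⟨_, _, hlub⟩ := h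
  exact (isUB_pair.1 hlub.1).1

theorem LubClosed.union_joinOne {Θ : Set (X → Option V)} (hΘ : LubClosed Θ)
    (θ : X → Option V) : LubClosed (Θ ∪ joinOne θ Θ) := by
  intro Θ' hsub u hu
  by_cases hΘ' : Θ' ⊆ Θ
  · exact Or.inl (hΘ Θ' hΘ' u hu)
  have hθu : PFle θ u := by
    obtain ⟨θ₁, hθ₁, hθ₁Θ⟩ := Set.not_subset.mp hΘ'
    exact (PFle_of_mem_joinOne ((hsub hθ₁).resolve_left hθ₁Θ)).trans (hu.1 θ₁ hθ₁)
  obtain ⟨w, hw, hwu⟩ := IsUB.exists_isLubPF (Θ := below u Θ) (u := u) fun _ hq => hq.2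
  have hwΘ : w ∈ Θ := hΘ _ (fun _ hq => hq.1) w hw
  refine Or.inr ⟨w, hwΘ, isUB_pair.2 ⟨hθu, hwu⟩, fun z hz => hu.2 z fun θ₂ hθ₂ => ?_⟩
  obtain ⟨hθz, hwz⟩ := isUB_pair.1 hz
  have hθ₂u := hu.1 θ₂ hθ₂
  rcases hsub hθ₂ with hθ₂Θ | ⟨θ'', hθ'', hlub⟩
  · exact (hw.1 θ₂ ⟨hθ₂Θ, hθ₂u⟩).trans hwz
  · have hθ''u : PFle θ'' u := (isUB_pair.1 hlub.1).2.trans hθ₂u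
    exact hlub.PFle_of_PFle_of_PFle hθz ((hw.1 θ'' ⟨hθ'', hθ''u⟩).trans hwz)

theorem lubClosure_union_singleton (I : Set (X → Option V)) (θ : X → Option V) :
    lubClosure (I ∪ {θ}) = lubClosure I ∪ joinOne θ (lubClosure I) := by
  apply Set.Subset.antisymm
  · refine lubClosure_subset ?_ ((lubClosed_lubClosure I).union_joinOne θ)
    rintro q (hq | rfl)
    · exact Or.inl (subset_lubClosure I hq)
    · exact Or.inr (mem_joinOne_self (lubClosed_lubClosure I).pbot_mem q)
  · rintro θ₁ (h | ⟨θ'', hθ'', hlub⟩)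
    · exact lubClosure_mono Set.subset_union_left h
    · refine lubClosed_lubClosure (I ∪ {θ}) {θ, θ''} ?_ θ₁ hlub
      rintro q (rfl | rfl)
      · exact subset_lubClosure _ (Or.inr rfl)
      · exact lubClosure_mono Set.subset_union_left hθ''

theorem thetaOf_nil : ThetaOf ([] : List (E × (X → Option V))) = {pbot} := by
  simp [ThetaOf, lubClosure_empty]

theorem thetaOf_append_singleton (τ : List (E × (X → Option V))) (ev : E × (X → Option V)) :
    ThetaOf (τ ++ [ev]) = ThetaOf τ ∪ joinOne ev.2 (ThetaOf τ) := by
  have hinst : {θ | ∃ e, (e, θ) ∈ τ ++ [ev]} = {θ | ∃ e, (e, θ) ∈ τ} ∪ {ev.2} := by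
    ext θ
    simp only [List.mem_append, List.mem_singleton, Prod.ext_iff]
    aesop
  rw [ThetaOf, hinst, lubClosure_union_singleton, ThetaOf]

theorem lubClosed_thetaOf (τ : List (E × (X → Option V))) : LubClosed (ThetaOf τ) :=
  lubClosed_lubClosure _

theorem snd_mem_thetaOf {τ : List (E × (X → Option V))} {p : E × (X → Option V)}
    (hp : p ∈ τ) : p.2 ∈ ThetaOf τ :=
  subset_lubClosure _ ⟨p.1, hp⟩

theorem traceSlice_append_singleton_of_PFle (τ : List (E × (X → Option V)))
    {ev : E × (X → Option V)} {θ : X → Option V} (h : PFle ev.2 θ) :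
    traceSlice (τ ++ [ev]) θ = traceSlice τ θ ++ [ev.1] := by
  simp [traceSlice, h]

theorem traceSlice_append_singleton_of_not_PFle (τ : List (E × (X → Option V)))
    {ev : E × (X → Option V)} {θ : X → Option V} (h : ¬ PFle ev.2 θ) :
    traceSlice (τ ++ [ev]) θ = traceSlice τ θ := by
  simp [traceSlice, h]

theorem traceSlice_maxBelow {Θ : Set (X → Option V)} (hΘ : LubClosed Θ)
    {τ : List (E × (X → Option V))} (hτ : ∀ p ∈ τ, p.2 ∈ Θ) (θ : X → Option V) :
    traceSlice τ (maxBelow Θ θ) = traceSlice τ θ := by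
  obtain ⟨⟨-, hmθ⟩, hmax⟩ := hΘ.maxBelow_spec θ
  unfold traceSlice
  congr 1
  refine List.filter_congr fun p hp => ?_
  simp only [decide_eq_decide]
  exact ⟨fun h => h.trans hmθ, fun h => hmax p.2 ⟨hτ p hp, h⟩⟩

theorem Astep_T_of_mem_joinOne {s : AState X V E} {ev : E × (X → Option V)}
    {θ : X → Option V} (h : θ ∈ joinOne ev.2 s.Th) :
    (Astep s ev).T θ = (s.T (maxBelow s.Th θ)).map (· ++ [ev.1]) :=
  if_pos h

theorem Astep_T_of_not_mem_joinOne {s : AState X V E} {ev : E × (X → Option V)}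
    {θ : X → Option V} (h : θ ∉ joinOne ev.2 s.Th) : (Astep s ev).T θ = s.T θ :=
  if_neg h

theorem Arun_append_singleton (τ : List (E × (X → Option V))) (ev : E × (X → Option V)) :
    Arun (τ ++ [ev]) = Astep (Arun τ) ev :=
  List.foldl_append ..

theorem Arun_Th (τ : List (E × (X → Option V))) : (Arun τ).Th = ThetaOf τ := by
  induction τ using List.reverseRecOn with
  | nil => rw [thetaOf_nil]; rfl
  | append_singleton τ ev ih =>
    rw [Arun_append_singleton, thetaOf_append_singleton, ← ih]
    rfl

theorem lubClosed_Arun_Th (τ : List (E × (X → Option V))) : LubClosed (Arun τ).Th :=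
  Arun_Th τ ▸ lubClosed_thetaOf τ

theorem snd_mem_Arun_Th {τ : List (E × (X → Option V))} {p : E × (X → Option V)}
    (hp : p ∈ τ) : p.2 ∈ (Arun τ).Th :=
  Arun_Th τ ▸ snd_mem_thetaOf hp

theorem Arun_T_of_not_mem (τ : List (E × (X → Option V))) {θ : X → Option V}
    (hθ : θ ∉ (Arun τ).Th) : (Arun τ).T θ = none := by
  induction τ using List.reverseRecOn with
  | nil => exact if_neg hθ
  | append_singleton τ ev ih =>
    rw [Arun_append_singleton] at hθ ⊢
    rw [Astep_T_of_not_mem_joinOne fun h => hθ (Or.inr h)]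
    exact ih fun h => hθ (Or.inl h)

theorem Arun_T_of_mem (τ : List (E × (X → Option V))) {θ : X → Option V}
    (hθ : θ ∈ (Arun τ).Th) : (Arun τ).T θ = some (traceSlice τ θ) := by
  induction τ using List.reverseRecOn generalizing θ with
  | nil =>
    rw [Set.mem_singleton_iff.1 hθ]
    exact if_pos rfl
  | append_singleton τ ev ih =>
    rw [Arun_append_singleton] at hθ ⊢
    have hclosed := lubClosed_Arun_Th τ
    by_cases hj : θ ∈ joinOne ev.2 (Arun τ).Th
    · rw [Astep_T_of_mem_joinOne hj, ih (hclosed.maxBelow_spec θ).1.1,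
        traceSlice_maxBelow hclosed (fun _ => snd_mem_Arun_Th),
        traceSlice_append_singleton_of_PFle τ (PFle_of_mem_joinOne hj)]
      rfl
    · have hmem : θ ∈ (Arun τ).Th := hθ.resolve_right hj
      rw [Astep_T_of_not_mem_joinOne hj, traceSlice_append_singleton_of_not_PFle τ
        fun h => hj (mem_joinOne_of_PFle hmem h)]
      exact ih hmem

/-- Correctness of the trace slicing algorithm A⟨X⟩ (Theorem 1):
(1) Dom(A(τ).T) = A(τ).Θ = Θ_τ;
(2) A(τ).T(θ) = τ↾θ for every θ ∈ A(τ).Θ;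
(3) τ↾θ = A(τ).T(max (θ]_{A(τ).Θ}) for every parameter instance θ. -/
theorem stmt17 (τ : List (E × (X → Option V))) :
    ({θ | (Arun τ).T θ ≠ none} = (Arun τ).Th ∧ (Arun τ).Th = ThetaOf τ) ∧
    (∀ θ ∈ (Arun τ).Th, (Arun τ).T θ = some (traceSlice τ θ)) ∧
    (∀ θ : X → Option V,
      (Arun τ).T (maxBelow (Arun τ).Th θ) = some (traceSlice τ θ)) := by
  have hclosed := lubClosed_Arun_Th τ
  have hdom : {θ | (Arun τ).T θ ≠ none} = (Arun τ).Th := by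
    ext θ
    refine ⟨fun h => ?_, fun h => by simp [Arun_T_of_mem τ h]⟩
    by_contra hθ
    exact h (Arun_T_of_not_mem τ hθ)
  refine ⟨⟨hdom, Arun_Th τ⟩, fun θ => Arun_T_of_mem τ, fun θ => ?_⟩
  rw [Arun_T_of_mem τ (hclosed.maxBelow_spec θ).1.1,
    traceSlice_maxBelow hclosed fun _ => snd_mem_Arun_Th]
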